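/- arXiv:1406.4834 — 2 statements merged into one kernel-verified Lean document; each statement's English description precedes it below -/
import Mathlib

section
/- Let H be the Hilbert space ℓ² direct sum of countably many copies of ℝ² (sequences (z_j)_{j≥0} with z_j ∈ ℝ² and ∑‖z_j‖² < ∞). There exist closed subspaces U and V of H with U ∩ V = {0} such that for every α > 1/2 there exists z^0 ∈ H with the following property: defining the Douglas–Rachford operator T(z) := (1/2)(z + R_V(R_U(z))), where R_W := 2P_W − I and P_W is the orthogonal projection onto the closed subspace W, and the iterates z^{k+1} := T(z^k), one has ‖T z^k − z^k‖² ≥ 1/(k+1)^{2α} for all k ≥ 1. -/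
/-!
On the `j`-th coordinate plane take `U` to be the first axis and `V` the line at angle `θⱼ`
from it, with `sin² θⱼ = 1/(j+1)`. For two lines in `ℝ²` the Douglas–Rachford operator is
`cos θ` times the rotation by `θ`, so each block contracts by `cos² θⱼ = j/(j+1)` per step in
squared norm, and its residual is `sin² θⱼ` times the squared norm of the current block. Hence
`‖T zᵏ - zᵏ‖² = ∑ⱼ (j+1)⁻¹ (j/(j+1))ᵏ ‖z⁰ⱼ‖²`. Choosing `‖z⁰ⱼ‖² ∝ (j+1)^(-2α)` (square summable
exactly because `α > 1/2`), the blocks `k ≤ j < 2k` alone contribute `≳ k · k⁻¹ · k^(-2α)`,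
since there `(j/(j+1))ᵏ ≥ (k/(k+1))ᵏ ≥ 1/e`.
-/

noncomputable section

open scoped RealInnerProductSpace

def douglasRachford {F : Type*} [AddCommGroup F] [Module ℝ F] (P Q : F → F) (z : F) : F :=
  (1 / 2 : ℝ) • (z + ((2 : ℝ) • Q ((2 : ℝ) • P z - z) - ((2 : ℝ) • P z - z)))

namespace lp

section Normed

variable {ι : Type*} {E : ι → Type*} [∀ i, NormedAddCommGroup (E i)]

lemma norm_sq_eq_tsum (x : lp E 2) : ‖x‖ ^ 2 = ∑' i, ‖x i‖ ^ 2 := by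
  simpa using lp.norm_rpow_eq_tsum (p := 2) (by norm_num) x

lemma norm_sub_sq_eq_tsum_of_blockwise {T : lp E 2 → lp E 2} {τ : ∀ i, E i → E i}
    {a b : ι → ℝ} (hT : ∀ x i, T x i = τ i (x i)) (ha : ∀ i w, ‖τ i w‖ ^ 2 = a i * ‖w‖ ^ 2)
    (hb : ∀ i w, ‖τ i w - w‖ ^ 2 = b i * ‖w‖ ^ 2) {z : ℕ → lp E 2}
    (hz : ∀ k, z (k + 1) = T (z k)) (k : ℕ) :
    ‖z (k + 1) - z k‖ ^ 2 = ∑' i, b i * a i ^ k * ‖z 0 i‖ ^ 2 := by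
  have hiter : ∀ k i, ‖z k i‖ ^ 2 = a i ^ k * ‖z 0 i‖ ^ 2 := by
    intro k i
    induction k with
    | zero => simp
    | succ k ih => rw [hz, hT, ha, ih]; ring
  rw [norm_sq_eq_tsum]
  refine tsum_congr fun i => ?_
  rw [coeFn_sub, Pi.sub_apply, hz, hT, hb, hiter, mul_assoc]

end Normed

variable {ι : Type*} {E : ι → Type*} [∀ i, NormedAddCommGroup (E i)]
  [∀ i, InnerProductSpace ℝ (E i)]

def blockSubmodule (W : ∀ i, Submodule ℝ (E i)) : Submodule ℝ (lp E 2) :=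
  ⨅ i, (W i).comap (lp.evalₗ E 2 i)

lemma mem_blockSubmodule {W : ∀ i, Submodule ℝ (E i)} {x : lp E 2} :
    x ∈ blockSubmodule W ↔ ∀ i, x i ∈ W i := by
  simp [blockSubmodule]

lemma isClosed_blockSubmodule {W : ∀ i, Submodule ℝ (E i)}
    (hW : ∀ i, IsClosed (W i : Set (E i))) : IsClosed (blockSubmodule W : Set (lp E 2)) := by
  have : (blockSubmodule W : Set (lp E 2)) = ⋂ i, (fun x : lp E 2 => x i) ⁻¹' W i := by
    ext x
    simp [mem_blockSubmodule]
  rw [this]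
  exact isClosed_iInter fun i => (hW i).preimage (lipschitzWith_one_eval 2 i).continuous

lemma blockSubmodule_inf_eq_bot {W W' : ∀ i, Submodule ℝ (E i)} (h : ∀ i, W i ⊓ W' i = ⊥) :
    blockSubmodule W ⊓ blockSubmodule W' = ⊥ := by
  refine eq_bot_iff.2 fun x ⟨hx, hx'⟩ => ?_
  rw [SetLike.mem_coe, mem_blockSubmodule] at hx hx'
  rw [Submodule.mem_bot]
  ext i
  have hi : x i ∈ W i ⊓ W' i := ⟨hx i, hx' i⟩
  rwa [h i, Submodule.mem_bot] at hi

variable (W : ∀ i, Submodule ℝ (E i)) [∀ i, (W i).HasOrthogonalProjection]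

def blockProj (x : lp E 2) : lp E 2 :=
  ⟨fun i => (W i).starProjection (x i),
    (lp.memℓp x).mono' fun i => (W i).norm_starProjection_apply_le (x i)⟩

@[simp]
lemma blockProj_apply (x : lp E 2) (i : ι) : blockProj W x i = (W i).starProjection (x i) :=
  rfl

lemma blockProj_mem (x : lp E 2) : blockProj W x ∈ blockSubmodule W :=
  mem_blockSubmodule.2 fun i => (W i).starProjection_apply_mem (x i)

lemma sub_blockProj_mem_orthogonal (x : lp E 2) :
    x - blockProj W x ∈ (blockSubmodule W)ᗮ := by
  refine (Submodule.mem_orthogonal _ _).2 fun u hu => ?_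
  rw [lp.inner_eq_tsum]
  refine (tsum_congr fun i => ?_).trans tsum_zero
  exact (W i).inner_right_of_mem_orthogonal (mem_blockSubmodule.1 hu i)
    ((W i).sub_starProjection_mem_orthogonal (x i))

lemma douglasRachford_blockProj_apply (W' : ∀ i, Submodule ℝ (E i))
    [∀ i, (W' i).HasOrthogonalProjection] (x : lp E 2) (i : ι) :
    douglasRachford (blockProj W) (blockProj W') x i =
      douglasRachford (W i).starProjection (W' i).starProjection (x i) := by
  simp only [douglasRachford, coeFn_smul, coeFn_add, coeFn_sub, Pi.smul_apply, Pi.add_apply,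
    Pi.sub_apply, blockProj_apply]

end lp

namespace EuclideanSpace

lemma norm_sq_fin_two (w : EuclideanSpace ℝ (Fin 2)) : ‖w‖ ^ 2 = w 0 ^ 2 + w 1 ^ 2 := by
  simp [EuclideanSpace.real_norm_sq_eq, Fin.sum_univ_two]

lemma inner_fin_two (v w : EuclideanSpace ℝ (Fin 2)) : ⟪v, w⟫ = v 0 * w 0 + v 1 * w 1 := by
  simp [PiLp.inner_apply, Fin.sum_univ_two, mul_comm]

variable {c s : ℝ}

lemma norm_eq_one_of_sq_add_sq (hcs : c ^ 2 + s ^ 2 = 1) : ‖!₂[c, s]‖ = 1 := by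
  rw [EuclideanSpace.norm_eq]
  simp [Fin.sum_univ_two, hcs]

lemma douglasRachford_lines (hcs : c ^ 2 + s ^ 2 = 1) (w : EuclideanSpace ℝ (Fin 2)) :
    douglasRachford (ℝ ∙ !₂[(1 : ℝ), 0]).starProjection (ℝ ∙ !₂[c, s]).starProjection w =
      !₂[c * (c * w 0 - s * w 1), c * (s * w 0 + c * w 1)] := by
  rw [douglasRachford, Submodule.starProjection_unit_singleton ℝ (norm_eq_one_of_sq_add_sq hcs),
    Submodule.starProjection_unit_singleton ℝ
      (norm_eq_one_of_sq_add_sq (c := 1) (s := 0) (by norm_num))]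
  ext i
  fin_cases i <;>
    simp only [inner_fin_two, Fin.zero_eta, Fin.mk_one, Matrix.cons_val_zero, Matrix.cons_val_one,
      Matrix.cons_val_fin_one, PiLp.add_apply, PiLp.sub_apply, PiLp.smul_apply, smul_eq_mul]
  · ring
  · linear_combination (-w 1) * hcs

lemma norm_douglasRachford_lines_sq (hcs : c ^ 2 + s ^ 2 = 1) (w : EuclideanSpace ℝ (Fin 2)) :
    ‖douglasRachford (ℝ ∙ !₂[(1 : ℝ), 0]).starProjection (ℝ ∙ !₂[c, s]).starProjection w‖ ^ 2 =
      c ^ 2 * ‖w‖ ^ 2 := by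
  rw [douglasRachford_lines hcs, norm_sq_fin_two, norm_sq_fin_two]
  simp only [Matrix.cons_val_zero, Matrix.cons_val_one, Matrix.cons_val_fin_one]
  linear_combination (c ^ 2 * (w 0 ^ 2 + w 1 ^ 2)) * hcs

lemma norm_douglasRachford_lines_sub_sq (hcs : c ^ 2 + s ^ 2 = 1)
    (w : EuclideanSpace ℝ (Fin 2)) :
    ‖douglasRachford (ℝ ∙ !₂[(1 : ℝ), 0]).starProjection (ℝ ∙ !₂[c, s]).starProjection w - w‖ ^ 2 =
      s ^ 2 * ‖w‖ ^ 2 := by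
  rw [douglasRachford_lines hcs, norm_sq_fin_two, norm_sq_fin_two]
  simp only [PiLp.sub_apply, Matrix.cons_val_zero, Matrix.cons_val_one, Matrix.cons_val_fin_one]
  linear_combination ((w 0 ^ 2 + w 1 ^ 2) * (c ^ 2 - 1)) * hcs

lemma span_inf_span_eq_bot (hs : s ≠ 0) : (ℝ ∙ !₂[(1 : ℝ), 0]) ⊓ (ℝ ∙ !₂[c, s]) = ⊥ := by
  refine eq_bot_iff.2 fun w ⟨hw, hw'⟩ => ?_
  obtain ⟨a, rfl⟩ := Submodule.mem_span_singleton.1 hw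
  obtain ⟨b, hb⟩ := Submodule.mem_span_singleton.1 hw'
  have hb0 : b = 0 := by simpa [hs] using congrArg (· 1) hb
  rw [← hb, hb0, zero_smul]
  exact zero_mem _

end EuclideanSpace

lemma summable_one_div_nat_add_one_rpow {s : ℝ} (hs : 1 < s) :
    Summable fun j : ℕ => 1 / ((j : ℝ) + 1) ^ s :=
  ((Real.summable_one_div_nat_add_rpow 1 s).2 hs).congr fun j => by
    rw [abs_of_nonneg (by positivity)]

lemma quarter_le_pow_div_succ (k : ℕ) : (1 / 4 : ℝ) ≤ ((k : ℝ) / (k + 1)) ^ k := by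
  rcases k.eq_zero_or_pos with rfl | hk
  · norm_num
  have hbase : (k : ℝ) / (k + 1) = (1 + (k : ℝ)⁻¹)⁻¹ := by
    field_simp
  rw [hbase, inv_pow, one_div]
  refine inv_anti₀ (by positivity) (Real.one_add_inv_pow_le_exp.trans ?_)
  linarith [Real.exp_one_lt_d9]

lemma div_succ_le_div_succ {k j : ℕ} (h : k ≤ j) : (k : ℝ) / (k + 1) ≤ j / (j + 1) := by
  rw [div_le_div_iff₀ (by positivity) (by positivity)]
  have : (k : ℝ) ≤ j := by exact_mod_cast h
  linarith

/-- The squared norms of the blocks of the initial point; the constant `8 · 2^(2α)` makes the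
blocks `k ≤ j < 2k` alone contribute `k^(-2α)` to the residual. -/
def fprWeight (α : ℝ) (j : ℕ) : ℝ := 8 * 2 ^ (2 * α) / ((j : ℝ) + 1) ^ (2 * α)

lemma fprWeight_nonneg (α : ℝ) (j : ℕ) : 0 ≤ fprWeight α j := by
  unfold fprWeight
  positivity

lemma summable_fprWeight {α : ℝ} (hα : 1 / 2 < α) : Summable (fprWeight α) :=
  ((summable_one_div_nat_add_one_rpow (s := 2 * α) (by linarith)).mul_left
    (8 * 2 ^ (2 * α))).congr fun j => by rw [fprWeight, mul_one_div]

lemma one_div_succ_rpow_le_tsum {α : ℝ} (hα : 1 / 2 < α) {k : ℕ} (hk : 1 ≤ k) :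
    1 / ((k : ℝ) + 1) ^ (2 * α) ≤
      ∑' j : ℕ, 1 / ((j : ℝ) + 1) * ((j : ℝ) / (j + 1)) ^ k * fprWeight α j := by
  set f : ℕ → ℝ := fun j => 1 / ((j : ℝ) + 1) * ((j : ℝ) / (j + 1)) ^ k * fprWeight α j
  have hk0 : (0 : ℝ) < k := by exact_mod_cast hk
  have hf_nonneg : ∀ j, 0 ≤ f j := fun j => by have := fprWeight_nonneg α j; positivity
  have hf_summable : Summable f := by
    refine (summable_fprWeight hα).of_nonneg_of_le hf_nonneg fun j => ?_
    have h₁ : 1 / ((j : ℝ) + 1) ≤ 1 := by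
      rw [div_le_one (by positivity)]; linarith [(j.cast_nonneg : (0 : ℝ) ≤ j)]
    have h₂ : ((j : ℝ) / (j + 1)) ^ k ≤ 1 :=
      pow_le_one₀ (by positivity) (by rw [div_le_one (by positivity)]; linarith)
    exact mul_le_of_le_one_left (fprWeight_nonneg α j) (mul_le_one₀ h₁ (by positivity) h₂)
  have hblock : ∀ j ∈ Finset.Ico k (2 * k),
      1 / (2 * k) * (1 / 4) * (8 * 2 ^ (2 * α) / (2 * k : ℝ) ^ (2 * α)) ≤ f j := by
    intro j hj
    obtain ⟨hkj, hj2k⟩ := Finset.mem_Ico.1 hj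
    have hj2k : (j : ℝ) + 1 ≤ 2 * k := by exact_mod_cast hj2k
    unfold f fprWeight
    gcongr
    exact (quarter_le_pow_div_succ k).trans
      (pow_le_pow_left₀ (by positivity) (div_succ_le_div_succ hkj) k)
  calc 1 / ((k : ℝ) + 1) ^ (2 * α)
      ≤ 1 / (k : ℝ) ^ (2 * α) := by gcongr; linarith
    _ = k * (1 / (2 * k) * (1 / 4) * (8 * 2 ^ (2 * α) / (2 * k : ℝ) ^ (2 * α))) := by
      rw [Real.mul_rpow (by norm_num) hk0.le]
      field_simp
      ring
    _ ≤ ∑ j ∈ Finset.Ico k (2 * k), f j := by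
      simpa [Nat.card_Ico, two_mul] using Finset.card_nsmul_le_sum _ f _ hblock
    _ ≤ ∑' j, f j := hf_summable.sum_le_tsum _ fun j _ => hf_nonneg j

def initialPoint {α : ℝ} (hα : 1 / 2 < α) : lp (fun _ : ℕ => EuclideanSpace ℝ (Fin 2)) 2 :=
  ⟨fun j => EuclideanSpace.single 0 √(fprWeight α j),
    memℓp_gen ((summable_fprWeight hα).congr fun j => by
      simp [PiLp.norm_single, Real.sq_sqrt (fprWeight_nonneg α j)])⟩

lemma norm_initialPoint_apply_sq {α : ℝ} (hα : 1 / 2 < α) (j : ℕ) :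
    ‖initialPoint hα j‖ ^ 2 = fprWeight α j := by
  simp [initialPoint, PiLp.norm_single, Real.sq_sqrt (fprWeight_nonneg α j)]

lemma sq_sqrt_div_succ_add_sq_sqrt_one_div_succ (j : ℕ) :
    √((j : ℝ) / (j + 1)) ^ 2 + √(1 / ((j : ℝ) + 1)) ^ 2 = 1 := by
  rw [Real.sq_sqrt (by positivity), Real.sq_sqrt (by positivity), ← add_div,
    div_self (by positivity)]

end

/-- Theorem (lower FPR complexity of DRS): in the Hilbert space `H = ℓ²(ℕ; ℝ²)` there exist
closed subspaces `U, V` with `U ∩ V = {0}` such that for every `α > 1/2` there is a point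
`z^0 ∈ H` such that the Douglas–Rachford iterates
`z^{k+1} = T z^k`, `T z = (1/2)(z + R_V(R_U z))` with `R_W = 2 P_W − I`, satisfy
`‖T z^k − z^k‖² ≥ 1/(k+1)^{2α}` for all `k ≥ 1`. -/
theorem drs_lower_fpr_complexity :
    ∃ (U V : Submodule ℝ (lp (fun _ : ℕ => EuclideanSpace ℝ (Fin 2)) 2)),
      IsClosed (U : Set (lp (fun _ : ℕ => EuclideanSpace ℝ (Fin 2)) 2)) ∧
      IsClosed (V : Set (lp (fun _ : ℕ => EuclideanSpace ℝ (Fin 2)) 2)) ∧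
      U ⊓ V = ⊥ ∧
      ∀ α : ℝ, 1 / 2 < α →
        ∃ z0 : lp (fun _ : ℕ => EuclideanSpace ℝ (Fin 2)) 2,
        ∃ PU PV : lp (fun _ : ℕ => EuclideanSpace ℝ (Fin 2)) 2 →
            lp (fun _ : ℕ => EuclideanSpace ℝ (Fin 2)) 2,
          (∀ x, PU x ∈ U ∧ x - PU x ∈ Uᗮ) ∧
          (∀ x, PV x ∈ V ∧ x - PV x ∈ Vᗮ) ∧
          (∀ z : ℕ → lp (fun _ : ℕ => EuclideanSpace ℝ (Fin 2)) 2,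
            z 0 = z0 →
            (∀ k : ℕ, z (k + 1) = (1 / 2 : ℝ) •
              (z k + ((2 : ℝ) • PV ((2 : ℝ) • PU (z k) - z k) - ((2 : ℝ) • PU (z k) - z k)))) →
            ∀ k : ℕ, 1 ≤ k →
              1 / ((k : ℝ) + 1) ^ (2 * α) ≤ ‖z (k + 1) - z k‖ ^ 2) := by
  have hcs := sq_sqrt_div_succ_add_sq_sqrt_one_div_succ
  refine ⟨lp.blockSubmodule fun _ => ℝ ∙ !₂[(1 : ℝ), 0],
    lp.blockSubmodule fun j : ℕ => ℝ ∙ !₂[√((j : ℝ) / (j + 1)), √(1 / ((j : ℝ) + 1))],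
    lp.isClosed_blockSubmodule fun _ => Submodule.closed_of_finiteDimensional _,
    lp.isClosed_blockSubmodule fun _ => Submodule.closed_of_finiteDimensional _,
    lp.blockSubmodule_inf_eq_bot fun j => EuclideanSpace.span_inf_span_eq_bot (by positivity),
    fun α hα => ⟨initialPoint hα, lp.blockProj _, lp.blockProj _,
      fun x => ⟨lp.blockProj_mem _ x, lp.sub_blockProj_mem_orthogonal _ x⟩,
      fun x => ⟨lp.blockProj_mem _ x, lp.sub_blockProj_mem_orthogonal _ x⟩,
      fun z hz0 hrec k hk => ?_⟩⟩
  rw [lp.norm_sub_sq_eq_tsum_of_blockwise (lp.douglasRachford_blockProj_apply _ _)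
    (fun j => EuclideanSpace.norm_douglasRachford_lines_sq (hcs j))
    (fun j => EuclideanSpace.norm_douglasRachford_lines_sub_sq (hcs j)) hrec k, hz0]
  convert one_div_succ_rpow_le_tsum hα hk using 3 with j
  rw [norm_initialPoint_apply_sq, Real.sq_sqrt (by positivity), Real.sq_sqrt (by positivity)]
end

section
/- Let H be the Hilbert space ℓ² direct sum of countably many copies of ℝ². There exists a point z^0 ∈ H such that for every function h : ℝ₊ → (0,1) that is strictly decreasing with h(t) → 0 as t → ∞ and whose range contains {1/(n+1) : n ∈ ℕ, n ≥ 1}, there exist closed subspaces U and V of H with U ∩ V = {0} such that the Douglas–Rachford iterates z^{k+1} := (1/2)(z^k + R_V(R_U(z^k))) satisfy ‖z^k‖ ≥ e^{−1}·h(k) for all k ≥ 0, while nevertheless z^k → 0 in norm (and 0 is a fixed point of the Douglas–Rachford operator). -/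
noncomputable section DRSAux

open scoped InnerProductSpace ENNReal NNReal
open Filter

namespace DRSAux

abbrev E2 : Type := EuclideanSpace ℝ (Fin 2)
abbrev Hsp : Type := lp (fun _ : ℕ => E2) 2

def vec (c s : ℝ) : E2 := (WithLp.equiv 2 (Fin 2 → ℝ)).symm ![c, s]

@[simp] lemma vec_apply0 (c s : ℝ) : vec c s 0 = c := rfl
@[simp] lemma vec_apply1 (c s : ℝ) : vec c s 1 = s := rfl

lemma inner_E2 (x y : E2) : ⟪x, y⟫_ℝ = x 0 * y 0 + x 1 * y 1 := by
  simp [PiLp.inner_apply, Fin.sum_univ_two, RCLike.inner_apply, mul_comm]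

lemma norm_E2 (x : E2) : ‖x‖ = Real.sqrt (x 0 ^ 2 + x 1 ^ 2) := by
  rw [EuclideanSpace.norm_eq]
  simp [Fin.sum_univ_two, sq_abs]

lemma norm_vec (c s : ℝ) (h : c ^ 2 + s ^ 2 = 1) : ‖vec c s‖ = 1 := by
  rw [norm_E2]; simp [h]

end DRSAux

namespace DRSAux

def Tb (u : E2) (v : E2) : E2 :=
  (1/2 : ℝ) • (v + ((2:ℝ) • (⟪u, ((2:ℝ) • (⟪vec 1 0, v⟫_ℝ • vec 1 0) - v)⟫_ℝ • u)
    - ((2:ℝ) • (⟪vec 1 0, v⟫_ℝ • vec 1 0) - v)))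

lemma norm_Tb (c s : ℝ) (hc : 0 ≤ c) (h : c ^ 2 + s ^ 2 = 1) (v : E2) :
    ‖Tb (vec c s) v‖ = c * ‖v‖ := by
  have h0 : Tb (vec c s) v 0 = c * (c * v 0 - s * v 1) := by
    simp [Tb, inner_E2, PiLp.smul_apply, PiLp.add_apply, PiLp.sub_apply, smul_eq_mul]
    ring
  have h1 : Tb (vec c s) v 1 = c * (s * v 0 + c * v 1) := by
    simp [Tb, inner_E2, PiLp.smul_apply, PiLp.add_apply, PiLp.sub_apply, smul_eq_mul]
    linear_combination -(v 1) * h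
  rw [norm_E2, norm_E2, h0, h1]
  have : (c * (c * v 0 - s * v 1)) ^ 2 + (c * (s * v 0 + c * v 1)) ^ 2
      = c ^ 2 * (v 0 ^ 2 + v 1 ^ 2) := by nlinarith [h]
  rw [this, Real.sqrt_mul (sq_nonneg c), Real.sqrt_sq hc]

end DRSAux

namespace DRSAux

def lineSub (u : ℕ → E2) : Submodule ℝ Hsp where
  carrier := {f | ∀ n, ∃ r : ℝ, (f : ∀ _ : ℕ, E2) n = r • u n}
  add_mem' := by
    rintro f g hf hg n
    obtain ⟨r, hr⟩ := hf n; obtain ⟨q, hq⟩ := hg n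
    refine ⟨r + q, ?_⟩
    rw [lp.coeFn_add, Pi.add_apply, hr, hq, add_smul]
  zero_mem' := fun n => ⟨0, by simp [lp.coeFn_zero]⟩
  smul_mem' := by
    rintro a f hf n
    obtain ⟨r, hr⟩ := hf n
    refine ⟨a * r, ?_⟩
    rw [lp.coeFn_smul, Pi.smul_apply, hr, mul_smul]

lemma mem_lineSub {u : ℕ → E2} {f : Hsp} :
    f ∈ lineSub u ↔ ∀ n, ∃ r : ℝ, (f : ∀ _ : ℕ, E2) n = r • u n := Iff.rfl

lemma isClosed_lineSub (u : ℕ → E2) : IsClosed ((lineSub u : Submodule ℝ Hsp) : Set Hsp) := by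
  have heq : ((lineSub u : Submodule ℝ Hsp) : Set Hsp)
      = ⋂ n, (fun f : Hsp => (f : ∀ _ : ℕ, E2) n) ⁻¹' ((ℝ ∙ u n : Submodule ℝ E2) : Set E2) := by
    ext f
    simp only [Set.mem_iInter, Set.mem_preimage, SetLike.mem_coe, Submodule.mem_span_singleton]
    constructor
    · intro hf n; obtain ⟨r, hr⟩ := hf n; exact ⟨r, hr.symm⟩
    · intro hf n; obtain ⟨r, hr⟩ := hf n; exact ⟨r, hr.symm⟩
  rw [heq]
  refine isClosed_iInter fun n => IsClosed.preimage ?_ (Submodule.closed_of_finiteDimensional _)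
  have : LipschitzWith 1 (fun f : Hsp => (f : ∀ _ : ℕ, E2) n) := by
    refine LipschitzWith.mk_one fun f g => ?_
    have := lp.norm_apply_le_norm (p := (2 : ℝ≥0∞)) (by norm_num) (f - g) n
    rw [lp.coeFn_sub, Pi.sub_apply] at this
    simpa [dist_eq_norm] using this
  exact this.continuous

lemma projFn_memℓp (u : ℕ → E2) (hu : ∀ n, ‖u n‖ = 1) (f : Hsp) :
    Memℓp (fun n => (⟪u n, (f : ∀ _ : ℕ, E2) n⟫_ℝ : ℝ) • u n) 2 := by
  apply memℓp_gen
  have hs : Summable fun n => ‖(f : ∀ _ : ℕ, E2) n‖ ^ (2 : ℝ≥0∞).toReal :=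
    (lp.memℓp f).summable (by norm_num)
  refine hs.of_nonneg_of_le (fun n => Real.rpow_nonneg (norm_nonneg _) _) (fun n => ?_)
  refine Real.rpow_le_rpow (norm_nonneg _) ?_ (by norm_num)
  rw [norm_smul, Real.norm_eq_abs, hu n, mul_one]
  calc |⟪u n, (f : ∀ _ : ℕ, E2) n⟫_ℝ| ≤ ‖u n‖ * ‖(f : ∀ _ : ℕ, E2) n‖ :=
        abs_real_inner_le_norm _ _
    _ = ‖(f : ∀ _ : ℕ, E2) n‖ := by rw [hu n, one_mul]

def projMap (u : ℕ → E2) (hu : ∀ n, ‖u n‖ = 1) : Hsp → Hsp :=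
  fun f => ⟨fun n => (⟪u n, (f : ∀ _ : ℕ, E2) n⟫_ℝ : ℝ) • u n, projFn_memℓp u hu f⟩

@[simp] lemma projMap_apply (u : ℕ → E2) (hu : ∀ n, ‖u n‖ = 1) (f : Hsp) (n : ℕ) :
    (projMap u hu f : ∀ _ : ℕ, E2) n = (⟪u n, (f : ∀ _ : ℕ, E2) n⟫_ℝ : ℝ) • u n := rfl

lemma projMap_mem (u : ℕ → E2) (hu : ∀ n, ‖u n‖ = 1) (f : Hsp) :
    projMap u hu f ∈ lineSub u := fun n => ⟨⟪u n, (f : ∀ _ : ℕ, E2) n⟫_ℝ, rfl⟩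

lemma projMap_orth (u : ℕ → E2) (hu : ∀ n, ‖u n‖ = 1) (f : Hsp) :
    f - projMap u hu f ∈ (lineSub u)ᗮ := by
  rw [Submodule.mem_orthogonal]
  intro g hg
  rw [lp.inner_eq_tsum]
  have : ∀ n, ⟪(g : ∀ _ : ℕ, E2) n, ((f - projMap u hu f : Hsp) : ∀ _ : ℕ, E2) n⟫_ℝ = 0 := by
    intro n
    obtain ⟨r, hr⟩ := hg n
    rw [lp.coeFn_sub, Pi.sub_apply, hr, projMap_apply]
    rw [real_inner_smul_left, inner_sub_right, real_inner_smul_right,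
      real_inner_self_eq_norm_sq, hu n]
    ring
  simp only [this, tsum_zero]

end DRSAux

namespace DRSAux

def evec : ℕ → E2 := fun _ => vec 1 0

lemma evec_norm : ∀ n, ‖evec n‖ = 1 := fun _ => norm_vec 1 0 (by norm_num)

lemma z0_mem : Memℓp (fun n : ℕ => ((n : ℝ))⁻¹ • vec 1 0) 2 := by
  apply memℓp_gen
  have hs : Summable (fun n : ℕ => 1 / (n : ℝ) ^ 2) := Real.summable_one_div_nat_pow.mpr one_lt_two
  refine hs.congr fun n => ?_
  rw [norm_smul, norm_vec 1 0 (by norm_num), mul_one, Real.norm_eq_abs, abs_inv, Nat.abs_cast]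
  rw [show ((2 : ℝ≥0∞).toReal) = ((2 : ℕ) : ℝ) by simp, Real.rpow_natCast, inv_pow, one_div]

def z0v : Hsp := ⟨fun n : ℕ => ((n : ℝ))⁻¹ • vec 1 0, z0_mem⟩

lemma z0v_apply (n : ℕ) : (z0v : ∀ _ : ℕ, E2) n = ((n : ℝ))⁻¹ • vec 1 0 := rfl

lemma norm_z0v_apply (n : ℕ) : ‖(z0v : ∀ _ : ℕ, E2) n‖ = ((n : ℝ))⁻¹ := by
  rw [z0v_apply, norm_smul, norm_vec 1 0 (by norm_num), mul_one, Real.norm_eq_abs, abs_inv,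
    Nat.abs_cast]

lemma comp_rec (u : ℕ → E2) (hu : ∀ n, ‖u n‖ = 1) (f : Hsp) (n : ℕ) :
    ((((1/2 : ℝ) • (f + ((2 : ℝ) • projMap u hu ((2 : ℝ) • projMap evec evec_norm f - f)
        - ((2 : ℝ) • projMap evec evec_norm f - f)))) : Hsp) : ∀ _ : ℕ, E2) n
      = Tb (u n) ((f : ∀ _ : ℕ, E2) n) := by
  simp only [lp.coeFn_smul, lp.coeFn_add, lp.coeFn_sub, Pi.smul_apply, Pi.add_apply,
    Pi.sub_apply, projMap_apply, Tb, evec]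

end DRSAux

open Filter in
/-- Theorem (arbitrarily slow convergence of DRS): in `H = ℓ²(ℕ; ℝ²)` there is a point
`z^0` such that for every strictly decreasing `h : ℝ₊ → (0,1)` with `h(t) → 0` whose range
contains `{1/(n+1) : n ≥ 1}`, there exist closed subspaces `U, V` with `U ∩ V = {0}` such
that the Douglas–Rachford iterates `z^{k+1} = (1/2)(z^k + R_V(R_U z^k))` satisfy
`‖z^k‖ ≥ e⁻¹ h(k)` for all `k`, while `z^k → 0` and `0` is a fixed point of the DRS
operator. -/
theorem drs_arbitrarily_slow_convergence :
    ∃ z0 : lp (fun _ : ℕ => EuclideanSpace ℝ (Fin 2)) 2,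
      ∀ h : ℝ → ℝ,
        (∀ t : ℝ, 0 ≤ t → h t ∈ Set.Ioo (0 : ℝ) 1) →
        StrictAntiOn h (Set.Ici (0 : ℝ)) →
        Filter.Tendsto h Filter.atTop (nhds 0) →
        (∀ n : ℕ, 1 ≤ n → ∃ t : ℝ, 0 ≤ t ∧ h t = 1 / ((n : ℝ) + 1)) →
        ∃ (U V : Submodule ℝ (lp (fun _ : ℕ => EuclideanSpace ℝ (Fin 2)) 2)),
          IsClosed (U : Set (lp (fun _ : ℕ => EuclideanSpace ℝ (Fin 2)) 2)) ∧
          IsClosed (V : Set (lp (fun _ : ℕ => EuclideanSpace ℝ (Fin 2)) 2)) ∧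
          U ⊓ V = ⊥ ∧
          ∃ PU PV : lp (fun _ : ℕ => EuclideanSpace ℝ (Fin 2)) 2 →
              lp (fun _ : ℕ => EuclideanSpace ℝ (Fin 2)) 2,
            (∀ x, PU x ∈ U ∧ x - PU x ∈ Uᗮ) ∧
            (∀ x, PV x ∈ V ∧ x - PV x ∈ Vᗮ) ∧
            ((1 / 2 : ℝ) • ((0 : lp (fun _ : ℕ => EuclideanSpace ℝ (Fin 2)) 2) +
              ((2 : ℝ) • PV ((2 : ℝ) • PU 0 - 0) - ((2 : ℝ) • PU 0 - 0))) = 0) ∧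
            (∀ z : ℕ → lp (fun _ : ℕ => EuclideanSpace ℝ (Fin 2)) 2,
              z 0 = z0 →
              (∀ k : ℕ, z (k + 1) = (1 / 2 : ℝ) •
                (z k + ((2 : ℝ) • PV ((2 : ℝ) • PU (z k) - z k) -
                  ((2 : ℝ) • PU (z k) - z k)))) →
              (∀ k : ℕ, (Real.exp 1)⁻¹ * h (k : ℝ) ≤ ‖z k‖) ∧
              Filter.Tendsto z Filter.atTop (nhds 0)) := by
  classical
  refine ⟨DRSAux.z0v, ?_⟩
  intro h hIoo hanti htend hrange
  set t : ℕ → ℝ := fun n => if hn : 1 ≤ n then (hrange n hn).choose else 1 with ht_def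
  have ht : ∀ n, 1 ≤ n → 0 ≤ t n ∧ h (t n) = 1 / ((n : ℝ) + 1) := by
    intro n hn
    simp only [ht_def, dif_pos hn]
    exact (hrange n hn).choose_spec
  set τ : ℕ → ℝ := fun n => max (t n) 1 with hτ_def
  have hτ1 : ∀ n, 1 ≤ τ n := fun n => le_max_right _ _
  have hτ0 : ∀ n, 0 < τ n := fun n => lt_of_lt_of_le one_pos (hτ1 n)
  set c : ℕ → ℝ := fun n => Real.exp (-(1 / τ n)) with hc_def
  have hc_pos : ∀ n, 0 < c n := fun n => Real.exp_pos _
  have hc_lt1 : ∀ n, c n < 1 := by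
    intro n
    rw [hc_def]
    simp only
    rw [Real.exp_lt_one_iff]
    rw [neg_lt_zero]
    exact div_pos one_pos (hτ0 n)
  set s : ℕ → ℝ := fun n => Real.sqrt (1 - c n ^ 2) with hs_def
  have hcs : ∀ n, c n ^ 2 + s n ^ 2 = 1 := by
    intro n
    have h1 : c n ^ 2 < 1 := by nlinarith [hc_pos n, hc_lt1 n]
    rw [hs_def]
    simp only
    rw [Real.sq_sqrt (by linarith)]
    ring
  have hs_pos : ∀ n, 0 < s n := by
    intro n
    apply Real.sqrt_pos.mpr
    nlinarith [hc_pos n, hc_lt1 n]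
  set u : ℕ → DRSAux.E2 := fun n => DRSAux.vec (c n) (s n) with hu_def
  have hu : ∀ n, ‖u n‖ = 1 := fun n => DRSAux.norm_vec _ _ (hcs n)
  refine ⟨DRSAux.lineSub DRSAux.evec, DRSAux.lineSub u,
    DRSAux.isClosed_lineSub _, DRSAux.isClosed_lineSub _, ?_,
    DRSAux.projMap DRSAux.evec DRSAux.evec_norm, DRSAux.projMap u hu,
    fun x => ⟨DRSAux.projMap_mem _ _ x, DRSAux.projMap_orth _ _ x⟩,
    fun x => ⟨DRSAux.projMap_mem _ _ x, DRSAux.projMap_orth _ _ x⟩, ?_, ?_⟩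
  · -- U ⊓ V = ⊥
    rw [eq_bot_iff]
    intro f hf
    rw [Submodule.mem_inf] at hf
    rw [Submodule.mem_bot]
    apply lp.ext
    funext n
    obtain ⟨r, hr⟩ := hf.1 n
    obtain ⟨q, hq⟩ := hf.2 n
    have h1 : (f : ∀ _ : ℕ, DRSAux.E2) n 1 = q * s n := by
      rw [hq, hu_def]
      simp [PiLp.smul_apply, smul_eq_mul]
    have h0 : (f : ∀ _ : ℕ, DRSAux.E2) n 1 = 0 := by
      rw [hr]
      simp [DRSAux.evec, PiLp.smul_apply, smul_eq_mul]
    have hq0 : q = 0 := by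
      have := h1.symm.trans h0
      exact (mul_eq_zero.mp this).resolve_right (ne_of_gt (hs_pos n))
    rw [lp.coeFn_zero, Pi.zero_apply, hq, hq0, zero_smul]
  · -- fixed point at 0
    apply lp.ext
    funext n
    rw [DRSAux.comp_rec u hu 0 n]
    have h0 : ((0 : DRSAux.Hsp) : ∀ _ : ℕ, DRSAux.E2) n = 0 := by
      rw [lp.coeFn_zero, Pi.zero_apply]
    rw [h0]
    simp [DRSAux.Tb]
  · -- the iterates
    intro z hz0 hrec
    have hcomp : ∀ k n, ‖(z k : ∀ _ : ℕ, DRSAux.E2) n‖ = c n ^ k * ((n : ℝ))⁻¹ := by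
      intro k
      induction k with
      | zero =>
        intro n
        rw [hz0, DRSAux.norm_z0v_apply, pow_zero, one_mul]
      | succ k ih =>
        intro n
        rw [hrec k, DRSAux.comp_rec u hu (z k) n]
        have : u n = DRSAux.vec (c n) (s n) := by rw [hu_def]
        rw [this, DRSAux.norm_Tb (c n) (s n) (hc_pos n).le (hcs n), ih n, pow_succ]
        ring
    constructor
    · -- lower bound
      intro k
      have hk0 : (0 : ℝ) ≤ (k : ℝ) := Nat.cast_nonneg k
      obtain ⟨hkpos, hklt⟩ := hIoo (k : ℝ) hk0
      obtain ⟨N, hN⟩ := exists_nat_one_div_lt hkpos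
      have hex : ∃ n : ℕ, 1 ≤ n ∧ (k : ℝ) ≤ t n := by
        refine ⟨N + 1, by omega, ?_⟩
        by_contra hcon
        push_neg at hcon
        have h1 := (ht (N + 1) (by omega)).1
        have h2 := (ht (N + 1) (by omega)).2
        have hlt : h (k : ℝ) < h (t (N + 1)) :=
          hanti (Set.mem_Ici.mpr h1) (Set.mem_Ici.mpr hk0) hcon
        rw [h2] at hlt
        have hle : 1 / (((N + 1 : ℕ) : ℝ) + 1) ≤ 1 / ((N : ℝ) + 1) := by
          apply one_div_le_one_div_of_le
          · positivity
          · push_cast; linarith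
        linarith
      set m := Nat.find hex with hm_def
      obtain ⟨hm1, hmk⟩ := Nat.find_spec hex
      have hck : (Real.exp 1)⁻¹ ≤ c m ^ k := by
        rw [hc_def]
        simp only
        rw [← Real.exp_nat_mul, ← Real.exp_neg]
        apply Real.exp_le_exp.mpr
        rw [mul_neg, neg_le_neg_iff, mul_one_div, div_le_one (hτ0 m)]
        exact le_trans hmk (le_max_left _ _)
      have hhm : h (k : ℝ) ≤ ((m : ℝ))⁻¹ := by
        rcases eq_or_lt_of_le hm1 with he | hlt2
        · rw [hm_def, ← he]
          norm_num
          exact hklt.le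
        · have hm2 : 2 ≤ m := hlt2
          have hnot := Nat.find_min hex (show m - 1 < m by omega)
          push_neg at hnot
          have hm11 : 1 ≤ m - 1 := by omega
          have htm : t (m - 1) < (k : ℝ) := hnot hm11
          have h1 := (ht (m - 1) hm11).1
          have h2 := (ht (m - 1) hm11).2
          have hlt : h (k : ℝ) < h (t (m - 1)) :=
            hanti (Set.mem_Ici.mpr h1) (Set.mem_Ici.mpr hk0) htm
          rw [h2] at hlt
          have hcast : ((m - 1 : ℕ) : ℝ) + 1 = (m : ℝ) := by
            have : m - 1 + 1 = m := by omega
            rw [← this]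
            push_cast
            ring
          rw [hcast] at hlt
          rw [← one_div]
          exact hlt.le
      calc (Real.exp 1)⁻¹ * h (k : ℝ)
          ≤ c m ^ k * ((m : ℝ))⁻¹ :=
            mul_le_mul hck hhm hkpos.le (pow_nonneg (hc_pos m).le k)
        _ = ‖(z k : ∀ _ : ℕ, DRSAux.E2) m‖ := (hcomp k m).symm
        _ ≤ ‖z k‖ := lp.norm_apply_le_norm (by norm_num) (z k) m
    · -- convergence to 0
      rw [tendsto_zero_iff_norm_tendsto_zero]
      have hsq : Tendsto (fun k => ‖z k‖ ^ 2) atTop (nhds 0) := by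
        have hnorm : ∀ k, ‖z k‖ ^ 2 = ∑' n, (c n ^ k * ((n : ℝ))⁻¹) ^ 2 := by
          intro k
          have hrp := lp.norm_rpow_eq_tsum (p := (2 : ℝ≥0∞)) (by norm_num) (z k)
          rw [show ((2 : ℝ≥0∞).toReal) = ((2 : ℕ) : ℝ) by simp] at hrp
          simp only [Real.rpow_natCast] at hrp
          rw [hrp]
          congr 1
          funext n
          rw [hcomp k n]
        simp only [hnorm]
        have h0 : (0 : ℝ) = ∑' _ : ℕ, (0 : ℝ) := by simp
        rw [h0]
        apply tendsto_tsum_of_dominated_convergence (bound := fun n : ℕ => ((n : ℝ)⁻¹) ^ 2)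
        · have hs : Summable (fun n : ℕ => 1 / (n : ℝ) ^ 2) :=
            Real.summable_one_div_nat_pow.mpr one_lt_two
          refine hs.congr fun n => ?_
          rw [one_div, inv_pow]
        · intro n
          have hfe : (fun k : ℕ => (c n ^ k * ((n : ℝ))⁻¹) ^ 2)
              = fun k : ℕ => (c n ^ 2) ^ k * (((n : ℝ))⁻¹) ^ 2 := by
            funext k
            rw [mul_pow, ← pow_mul, ← pow_mul, Nat.mul_comm]
          rw [hfe]
          have hlim := (tendsto_pow_atTop_nhds_zero_of_lt_one (sq_nonneg (c n))
            (by nlinarith [hc_lt1 n, hc_pos n])).mul_const ((((n : ℝ))⁻¹) ^ 2)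
          simpa using hlim
        · filter_upwards with k
          intro n
          rw [Real.norm_eq_abs, abs_of_nonneg (by positivity), mul_pow]
          have hle1 : (c n ^ k) ^ 2 ≤ 1 := by
            apply pow_le_one₀ (by positivity)
            exact pow_le_one₀ (hc_pos n).le (hc_lt1 n).le
          nlinarith [sq_nonneg ((n : ℝ)⁻¹)]
      have h2 : Tendsto (fun k => Real.sqrt (‖z k‖ ^ 2)) atTop (nhds (Real.sqrt 0)) :=
        (Real.continuous_sqrt.tendsto 0).comp hsq
      have hfun : (fun k => Real.sqrt (‖z k‖ ^ 2)) = fun k => ‖z k‖ :=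
        funext fun k => Real.sqrt_sq (norm_nonneg _)
      rw [hfun, Real.sqrt_zero] at h2
      exact h2
end DRSAux
end
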